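/- Let E be an ellipse with foci F₁, F₂ and center O, let M be a point on E, t the tangent line to E at M, and X the orthogonal projection of F₁ onto t. Then |OX| = d/2, where d = |MF₁| + |MF₂| is the string length of the ellipse; in particular |OX| is independent of the choice of M. Moreover, OX is parallel to the line F₁'F₂, where F₁' is the reflection of F₁ across t. -/

import Mathlib

open scoped RealInnerProductSpace

noncomputable section

abbrev Pt := EuclideanSpace ℝ (Fin 2)

/-- In the plane, a vector orthogonal to a nonzero vector `w` that is itself orthogonal
to a nonzero vector `v` must be a multiple of `v`. -/
lemma mem_line_of_inner_eq_zero (v w p : Pt) (hv : v ≠ 0) (hw : w ≠ 0)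
    (hvw : ⟪v, w⟫ = 0) (hp : ⟪w, p⟫ = 0) : ∃ s : ℝ, p = s • v := by
  set K : Submodule ℝ Pt := (ℝ ∙ v)ᗮ with hK
  have hwK : w ∈ K := by
    rw [hK, Submodule.mem_orthogonal_singleton_iff_inner_left]
    rwa [real_inner_comm] at hvw
  have hKrank : Module.finrank ℝ K = 1 := by
    have h := Submodule.finrank_add_finrank_orthogonal (K := ((ℝ ∙ v) : Submodule ℝ Pt))
    rw [finrank_span_singleton hv] at h
    have h2 : Module.finrank ℝ Pt = 2 := finrank_euclideanSpace_fin
    rw [h2] at h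
    rw [hK]
    omega
  have hspan : (ℝ ∙ w) = K := by
    apply Submodule.eq_of_le_of_finrank_eq
    · rwa [Submodule.span_singleton_le_iff_mem]
    · rw [finrank_span_singleton hw, hKrank]
  set c : ℝ := ⟪v, p⟫ / ⟪v, v⟫ with hc
  have hvv : ⟪v, v⟫ ≠ 0 := inner_self_ne_zero.mpr hv
  have hu : p - c • v ∈ K := by
    rw [hK, Submodule.mem_orthogonal_singleton_iff_inner_left]
    rw [real_inner_comm, inner_sub_right, real_inner_smul_right, hc,
      div_mul_cancel₀ _ hvv, sub_self]
  rw [← hspan, Submodule.mem_span_singleton] at hu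
  obtain ⟨r, hr⟩ := hu
  have hwu : ⟪w, p - c • v⟫ = 0 := by
    rw [inner_sub_right, real_inner_smul_right, hp]
    rw [real_inner_comm] at hvw
    rw [hvw]; ring
  rw [← hr, real_inner_smul_right, real_inner_self_eq_norm_sq] at hwu
  have hwn : ‖w‖ ^ 2 ≠ 0 := pow_ne_zero 2 (norm_ne_zero_iff.mpr hw)
  have hr0 : r = 0 := by
    rcases mul_eq_zero.mp hwu with h | h
    · exact h
    · exact absurd h hwn
  rw [hr0, zero_smul] at hr
  exact ⟨c, by linear_combination (norm := module) -hr⟩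

/-- A point on the segment from `A` to `B` splits the distance. -/
lemma seg_dist_split (A B : Pt) (θ : ℝ) (h0 : 0 ≤ θ) (h1 : θ ≤ 1) :
    dist (A + θ • (B - A)) A + dist (A + θ • (B - A)) B = dist A B := by
  have e1 : A + θ • (B - A) - A = θ • (B - A) := by module
  have e2 : A + θ • (B - A) - B = -((1 - θ) • (B - A)) := by module
  rw [dist_eq_norm, dist_eq_norm, dist_eq_norm, e1, e2, norm_neg, norm_smul, norm_smul,
    Real.norm_eq_abs, Real.norm_eq_abs, abs_of_nonneg h0, abs_of_nonneg (by linarith),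
    norm_sub_rev]
  ring

/-- Let `M` lie on the ellipse with foci `F₁, F₂` and string length `d`, let `t` be the
tangent line at `M` (the line through `M` with direction `v` all of whose other points
are strictly outside the ellipse), `X` the orthogonal projection of `F₁` onto `t`, `O`
the center, and `F₁'` the reflection of `F₁` in `t`.  Then `|OX| = d/2` (independent of
`M`) and `OX` is parallel to `F₁'F₂`. -/
theorem ellipse_tangent_pedal_circle
    (F₁ F₂ M O X F₁' : Pt) (d : ℝ) (v : Pt) (hv : v ≠ 0)
    (hd : dist F₁ F₂ < d)
    (hM : dist M F₁ + dist M F₂ = d)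
    (hO : O = midpoint ℝ F₁ F₂)
    (htangent : ∀ s : ℝ, s ≠ 0 → d < dist (M + s • v) F₁ + dist (M + s • v) F₂)
    (hX : X = M + (⟪F₁ - M, v⟫ / ⟪v, v⟫) • v)
    (hF₁' : F₁' = (2 : ℝ) • X - F₁) :
    dist O X = d / 2 ∧ ∃ s : ℝ, X - O = s • (F₂ - F₁') := by
  have hvv : ⟪v, v⟫ ≠ 0 := inner_self_ne_zero.mpr hv
  set c : ℝ := ⟪F₁ - M, v⟫ / ⟪v, v⟫ with hc
  -- w is the vector from the foot of the perpendicular to the focus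
  have hwv : ⟪F₁ - X, v⟫ = 0 := by
    rw [hX]
    have e : F₁ - (M + c • v) = (F₁ - M) - c • v := by module
    rw [e, inner_sub_left, real_inner_smul_left, hc, div_mul_cancel₀ _ hvv, sub_self]
  -- every point of the tangent line has focal sum ≥ d
  have hline : ∀ s : ℝ, d ≤ dist (M + s • v) F₁ + dist (M + s • v) F₂ := by
    intro s
    rcases eq_or_ne s 0 with h | h
    · simp [h, hM]
    · exact le_of_lt (htangent s h)
  -- reflection across the line preserves distances to points on the line
  have hrefl : ∀ s : ℝ, dist (M + s • v) F₁' = dist (M + s • v) F₁ := by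
    intro s
    have e1 : M + s • v - F₁' = (s - c) • v + (F₁ - X) := by
      rw [hF₁', hX]; module
    have e2 : M + s • v - F₁ = (s - c) • v - (F₁ - X) := by
      rw [hX]; module
    rw [dist_eq_norm, dist_eq_norm, e1, e2]
    have hsw : ⟪(s - c) • v, F₁ - X⟫ = 0 := by
      rw [real_inner_smul_left, real_inner_comm, hwv, mul_zero]
    have hadd := norm_add_sq_real ((s - c) • v) (F₁ - X)
    have hsub := norm_sub_sq_real ((s - c) • v) (F₁ - X)
    have hsq : ‖(s - c) • v + (F₁ - X)‖ ^ 2 = ‖(s - c) • v - (F₁ - X)‖ ^ 2 := by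
      rw [hadd, hsub, hsw]; ring
    rw [← Real.sqrt_sq (norm_nonneg ((s - c) • v + (F₁ - X))),
      ← Real.sqrt_sq (norm_nonneg ((s - c) • v - (F₁ - X))), hsq]
  -- the focus does not lie on the tangent line
  have hw0 : F₁ - X ≠ 0 := by
    intro h
    have hF₁X : F₁ = X := sub_eq_zero.mp h
    rcases eq_or_ne c 0 with hc0 | hc0
    · have hFM : F₁ = M := by rw [hF₁X, hX, hc0]; module
      have h1 : dist M F₁ = 0 := by rw [hFM, dist_self]
      have h2 : dist M F₂ = dist F₁ F₂ := by rw [hFM]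
      rw [h1, h2] at hM
      linarith
    · have := htangent c hc0
      rw [← hX, ← hF₁X] at this
      rw [dist_self] at this
      linarith
  -- points orthogonal to (F₁ - X) through X lie on the tangent line
  have hmem : ∀ P : Pt, ⟪F₁ - X, P - X⟫ = 0 → ∃ s : ℝ, P = M + s • v := by
    intro P hP
    obtain ⟨s, hs⟩ := mem_line_of_inner_eq_zero v (F₁ - X) (P - X) hv hw0
      (by rw [real_inner_comm]; exact hwv) hP
    rw [hX] at hs
    exact ⟨c + s, by linear_combination (norm := module) hs⟩
  have hwsq : ⟪F₁ - X, F₁ - X⟫ = ‖F₁ - X‖ ^ 2 := real_inner_self_eq_norm_sq _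
  have hwpos : 0 < ‖F₁ - X‖ ^ 2 := pow_pos (norm_pos_iff.mpr hw0) 2
  -- F₂ is on the same closed side of the tangent line as F₁
  have hside : 0 ≤ ⟪F₁ - X, F₂ - X⟫ := by
    by_contra hb
    push_neg at hb
    set a : ℝ := ‖F₁ - X‖ ^ 2
    set b : ℝ := ⟪F₁ - X, F₂ - X⟫
    have hab : 0 < a - b := by linarith
    set θ : ℝ := a / (a - b) with hθ
    have hθ0 : 0 ≤ θ := div_nonneg (le_of_lt hwpos) (le_of_lt hab)
    have hθ1 : θ ≤ 1 := (div_le_one hab).mpr (by linarith)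
    set Q : Pt := F₁ + θ • (F₂ - F₁) with hQ
    have hQX : ⟪F₁ - X, Q - X⟫ = 0 := by
      have e : Q - X = (F₁ - X) + θ • ((F₂ - X) - (F₁ - X)) := by rw [hQ]; module
      have e2 : ⟪F₁ - X, (F₂ - X) - (F₁ - X)⟫ = b - a := by
        rw [inner_sub_right, hwsq]
      rw [e, inner_add_right, real_inner_smul_right, e2, hwsq]
      show a + θ * (b - a) = 0
      have hθm : θ * (a - b) = a := by rw [hθ]; exact div_mul_cancel₀ _ hab.ne'
      linear_combination -hθm
    obtain ⟨s, hs⟩ := hmem Q hQX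
    have hle := hline s
    rw [← hs] at hle
    have hseg := seg_dist_split F₁ F₂ θ hθ0 hθ1
    rw [← hQ, dist_comm Q F₁, dist_comm F₁ Q] at hseg
    linarith [hle, hseg, hd]
  -- key claim: the reflected focus is at distance d from the other focus
  have hkey : dist F₂ F₁' = d := by
    have hMF : dist M F₁' = dist M F₁ := by
      have := hrefl 0
      simpa using this
    have hle : dist F₂ F₁' ≤ d := by
      calc dist F₂ F₁' ≤ dist F₂ M + dist M F₁' := dist_triangle _ _ _
        _ = dist M F₂ + dist M F₁ := by rw [hMF, dist_comm F₂ M]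
        _ = d := by linarith [hM]
    have hge : d ≤ dist F₂ F₁' := by
      set a : ℝ := ⟪F₁ - X, F₂ - X⟫
      have hF₁'X : ⟪F₁ - X, F₁' - X⟫ = -(‖F₁ - X‖ ^ 2) := by
        have e : F₁' - X = -(F₁ - X) := by rw [hF₁']; module
        rw [e, inner_neg_right, hwsq]
      have hden : 0 < a + ‖F₁ - X‖ ^ 2 := by positivity
      set θ : ℝ := a / (a + ‖F₁ - X‖ ^ 2) with hθ
      have hθ0 : 0 ≤ θ := div_nonneg hside (le_of_lt hden)
      have hθ1 : θ ≤ 1 := (div_le_one hden).mpr (by linarith)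
      set Q : Pt := F₂ + θ • (F₁' - F₂) with hQ
      have hQX : ⟪F₁ - X, Q - X⟫ = 0 := by
        have e : Q - X = (F₂ - X) + θ • ((F₁' - X) - (F₂ - X)) := by rw [hQ]; module
        have e2 : ⟪F₁ - X, (F₁' - X) - (F₂ - X)⟫ = -(‖F₁ - X‖ ^ 2) - a := by
          rw [inner_sub_right, hF₁'X]
        rw [e, inner_add_right, real_inner_smul_right, e2]
        show a + θ * (-(‖F₁ - X‖ ^ 2) - a) = 0
        have hθm : θ * (a + ‖F₁ - X‖ ^ 2) = a := by rw [hθ]; exact div_mul_cancel₀ _ hden.ne'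
        linear_combination -hθm
      obtain ⟨s, hs⟩ := hmem Q hQX
      have hle2 := hline s
      rw [← hs] at hle2
      have hQF₁ : dist Q F₁' = dist Q F₁ := by rw [hs]; exact hrefl s
      have hseg := seg_dist_split F₂ F₁' θ hθ0 hθ1
      rw [← hQ] at hseg
      calc d ≤ dist Q F₁ + dist Q F₂ := hle2
        _ = dist Q F₂ + dist Q F₁' := by rw [hQF₁]; ring
        _ = dist F₂ F₁' := by rw [dist_comm Q F₂, ← hseg, dist_comm Q F₂]
    linarith
  -- conclude
  have hXO : X - O = (-(1/2) : ℝ) • (F₂ - F₁') := by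
    rw [hO, hF₁', midpoint_eq_smul_add, invOf_eq_inv]
    module
  constructor
  · have : dist O X = ‖X - O‖ := by rw [dist_comm, dist_eq_norm]
    rw [this, hXO, norm_smul, Real.norm_eq_abs]
    have : ‖F₂ - F₁'‖ = dist F₂ F₁' := (dist_eq_norm _ _).symm
    rw [this, hkey]
    have habs : |(-(1/2) : ℝ)| = 1/2 := by norm_num
    rw [habs]
    ring
  · exact ⟨-(1/2), hXO⟩
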